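/- Let d ≥ 1 and let γ = (γ_1,…,γ_d) be a vector of positive real numbers. Then lim_{n→∞} mean(Δ_n(γ)·γ)/max(Δ_n(γ)·γ) = d/(d+1). -/

import Mathlib

/-- The weight of `m ∈ ℕ^d` with respect to the weight vector `γ`. -/
noncomputable def weight (d : ℕ) (γ : Fin d → ℝ) (m : Fin d → ℕ) : ℝ :=
  ∑ i, (m i : ℝ) * γ i

/-- `Δ_n(γ) = {m ∈ ℕ^d | m·γ < n+1}`. -/
def Delta (d : ℕ) (γ : Fin d → ℝ) (n : ℕ) : Set (Fin d → ℕ) :=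
  {m | weight d γ m < n + 1}

/-- The mean weight of a (finite) subset of `ℕ^d`. -/
noncomputable def meanWeight (d : ℕ) (γ : Fin d → ℝ) (B : Set (Fin d → ℕ)) : ℝ :=
  (B.ncard : ℝ)⁻¹ * ∑ᶠ b ∈ B, weight d γ b

/-- The maximal weight of an element of a subset of `ℕ^d`. -/
noncomputable def maxWeight (d : ℕ) (γ : Fin d → ℝ) (B : Set (Fin d → ℕ)) : ℝ :=
  sSup (weight d γ '' B)

/-!
The lattice points of `Δ_n(γ)` correspond to the points of the lattice `(n+1)⁻¹ ℤ^d` in the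
simplex `S = {x ≥ 0 | x·γ < 1}`, so `#Δ_n ~ vol(S) n^d`. Slicing by the integer part of the
weight, `∑_{b ∈ Δ_n} ⌊b·γ⌋ = n #Δ_n - ∑_{k<n} #Δ_k`, and the Cesàro-type averaging of
`#Δ_k ~ vol(S) k^d` gives `∑_{k<n} #Δ_k ~ vol(S) n^{d+1}/(d+1)`. Hence the total weight is
`~ vol(S) n^{d+1} d/(d+1)`, the mean weight is `~ n d/(d+1)`, and the maximal weight is `~ n`.
-/

open Filter Topology Finset MeasureTheory Asymptotics
open scoped Pointwise

theorem tendsto_natCast_add_div_natCast (a : ℝ) :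
    Tendsto (fun n : ℕ => ((n : ℝ) + a) / n) atTop (𝓝 1) := by
  rw [← add_zero (1 : ℝ)]
  refine ((tendsto_const_div_atTop_nhds_zero_nat a).const_add 1).congr' ?_
  filter_upwards [eventually_gt_atTop 0] with n hn
  rw [add_div, div_self (Nat.cast_ne_zero.2 hn.ne')]

theorem sum_range_pow_le_div (d n : ℕ) :
    ∑ k ∈ range n, (k : ℝ) ^ d ≤ (n : ℝ) ^ (d + 1) / (d + 1) := by
  have hmono : MonotoneOn (fun x : ℝ => x ^ d) (Set.Icc 0 (0 + n)) :=
    pow_left_monotoneOn.mono fun _ hx => hx.1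
  simpa [integral_pow] using hmono.sum_le_integral

theorem div_sub_pow_le_sum_range_pow (d n : ℕ) :
    (n : ℝ) ^ (d + 1) / (d + 1) - (n : ℝ) ^ d ≤ ∑ k ∈ range n, (k : ℝ) ^ d := by
  have hmono : MonotoneOn (fun x : ℝ => x ^ d) (Set.Icc 0 (0 + n)) :=
    pow_left_monotoneOn.mono fun _ hx => hx.1
  have hint : (n : ℝ) ^ (d + 1) / (d + 1) ≤ ∑ k ∈ range n, ((k : ℝ) + 1) ^ d := by
    simpa [integral_pow] using hmono.integral_le_sum
  have hshift : ∑ k ∈ range n, ((k : ℝ) + 1) ^ d + 0 ^ d = ∑ k ∈ range n, (k : ℝ) ^ d + n ^ d := by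
    simpa using (sum_range_succ' (fun k : ℕ => (k : ℝ) ^ d) n).symm.trans (sum_range_succ _ n)
  linarith [pow_nonneg (le_refl (0 : ℝ)) d]

theorem tendsto_sum_range_pow_div_pow_succ (d : ℕ) :
    Tendsto (fun n : ℕ => (∑ k ∈ range n, (k : ℝ) ^ d) / (n : ℝ) ^ (d + 1)) atTop
      (𝓝 (1 / (d + 1))) := by
  have hlim : Tendsto (fun n : ℕ => 1 / ((d : ℝ) + 1) - 1 / n) atTop (𝓝 (1 / (d + 1))) := by
    simpa using (tendsto_const_div_atTop_nhds_zero_nat (1 : ℝ)).const_sub (1 / ((d : ℝ) + 1))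
  refine tendsto_of_tendsto_of_tendsto_of_le_of_le' hlim tendsto_const_nhds ?_ ?_
  all_goals filter_upwards [eventually_gt_atTop 0] with n hn
  · have hn' : (0 : ℝ) < n := by exact_mod_cast hn
    rw [le_div_iff₀ (by positivity)]
    calc (1 / ((d : ℝ) + 1) - 1 / n) * (n : ℝ) ^ (d + 1)
        = (n : ℝ) ^ (d + 1) / (d + 1) - (n : ℝ) ^ d := by field_simp; ring
      _ ≤ _ := div_sub_pow_le_sum_range_pow d n
  · rw [div_le_iff₀ (by positivity), one_div_mul_eq_div]
    exact sum_range_pow_le_div d n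

theorem tendsto_sum_range_div_pow_succ {a : ℕ → ℝ} {v : ℝ} (d : ℕ)
    (ha : Tendsto (fun n => a n / (n : ℝ) ^ d) atTop (𝓝 v)) :
    Tendsto (fun n => (∑ k ∈ range n, a k) / (n : ℝ) ^ (d + 1)) atTop (𝓝 (v / (d + 1))) := by
  set g : ℕ → ℝ := fun k => (k : ℝ) ^ d
  have hg_ne : ∀ᶠ k in atTop, g k ≠ 0 := by
    filter_upwards [eventually_gt_atTop 0] with k hk
    exact pow_ne_zero _ (Nat.cast_ne_zero.2 hk.ne')
  have herr : (fun k => a k - v * g k) =o[atTop] g := by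
    rw [isLittleO_iff_tendsto' (hg_ne.mono fun k hk h => absurd h hk)]
    refine (tendsto_sub_nhds_zero_iff.2 ha).congr' ?_
    filter_upwards [hg_ne] with k hk
    rw [sub_div, mul_div_cancel_right₀ _ hk]
  have hsum_g : Tendsto (fun n => ∑ k ∈ range n, g k) atTop atTop := by
    refine ((tendsto_sum_range_pow_div_pow_succ d).pos_mul_atTop (by positivity)
      (tendsto_pow_atTop (Nat.succ_ne_zero d) |>.comp tendsto_natCast_atTop_atTop)).congr' ?_
    filter_upwards [eventually_gt_atTop 0] with n hn
    have : (n : ℝ) ^ (d + 1) ≠ 0 := pow_ne_zero _ (Nat.cast_ne_zero.2 hn.ne')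
    simp [g, div_mul_cancel₀ _ this]
  have hsum_g_le : (fun n => ∑ k ∈ range n, g k) =O[atTop] fun n => (n : ℝ) ^ (d + 1) := by
    refine IsBigO.of_bound 1 (Eventually.of_forall fun n => ?_)
    have hg_nonneg : 0 ≤ ∑ k ∈ range n, g k := sum_nonneg fun k _ => by positivity
    rw [Real.norm_of_nonneg hg_nonneg, Real.norm_of_nonneg (by positivity), one_mul]
    exact (sum_range_pow_le_div d n).trans (div_le_self (by positivity) (by linarith))
  have hsum_err : Tendsto (fun n => (∑ k ∈ range n, (a k - v * g k)) / (n : ℝ) ^ (d + 1))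
      atTop (𝓝 0) :=
    ((herr.sum_range (fun k => by positivity) hsum_g).trans_isBigO hsum_g_le).tendsto_div_nhds_zero
  have := ((tendsto_sum_range_pow_div_pow_succ d).const_mul v).add hsum_err
  rw [mul_one_div, add_zero] at this
  refine this.congr fun n => ?_
  simp only [sum_sub_distrib, ← mul_sum, g]
  ring

theorem Finset.sum_eq_sum_range_card_filter_lt {α : Type*} (s : Finset α) (f : α → ℕ) {n : ℕ}
    (hf : ∀ x ∈ s, f x ≤ n) : ∑ x ∈ s, f x = ∑ k ∈ range n, #{x ∈ s | k < f x} := by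
  calc ∑ x ∈ s, f x = ∑ x ∈ s, #{k ∈ range n | k < f x} := by
        refine sum_congr rfl fun x hx => ?_
        rw [show {k ∈ range n | k < f x} = range (f x) by
          ext k; simp only [mem_filter, mem_range]; have := hf x hx; omega, card_range]
    _ = ∑ k ∈ range n, #{x ∈ s | k < f x} := by
        simp only [card_filter]
        exact sum_comm

section Weights

variable {d : ℕ} {γ : Fin d → ℝ}

theorem weight_nonneg (hγ : ∀ i, 0 ≤ γ i) (m : Fin d → ℕ) : 0 ≤ weight d γ m :=
  sum_nonneg fun i _ => mul_nonneg (Nat.cast_nonneg _) (hγ i)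

theorem mul_le_weight (hγ : ∀ i, 0 ≤ γ i) (m : Fin d → ℕ) (i : Fin d) :
    (m i : ℝ) * γ i ≤ weight d γ m :=
  single_le_sum (f := fun j => (m j : ℝ) * γ j) (fun j _ => mul_nonneg (Nat.cast_nonneg _) (hγ j))
    (mem_univ i)

theorem weight_single (i : Fin d) (k : ℕ) : weight d γ (Pi.single i k) = k * γ i := by
  simp [weight, Pi.single_apply]

theorem zero_mem_Delta (n : ℕ) : 0 ∈ Delta d γ n := by
  show weight d γ 0 < n + 1
  simp only [weight, Pi.zero_apply, Nat.cast_zero, zero_mul, sum_const_zero]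
  positivity

theorem Delta_mono : Monotone (Delta d γ) := fun _ n hkn m hm =>
  show weight d γ m < n + 1 from hm.trans_le (by gcongr)

theorem finite_Delta (hγ : ∀ i, 0 < γ i) (n : ℕ) : (Delta d γ n).Finite := by
  refine (Set.Finite.pi fun i : Fin d => Set.finite_Iic ⌊(n + 1 : ℝ) / γ i⌋₊).subset
    fun m hm => ?_
  simp only [Set.mem_pi, Set.mem_univ, Set.mem_Iic, forall_true_left]
  exact fun i => Nat.le_floor <| (le_div_iff₀ (hγ i)).2 <|
    (mul_le_weight (fun j => (hγ j).le) m i).trans hm.le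

theorem floor_weight_le_iff_mem_Delta (hγ : ∀ i, 0 ≤ γ i) (m : Fin d → ℕ) (k : ℕ) :
    ⌊weight d γ m⌋₊ ≤ k ↔ m ∈ Delta d γ k := by
  rw [← Nat.lt_succ_iff, Nat.floor_lt (weight_nonneg hγ m)]
  simp [Delta]

theorem sum_floor_weight_Delta (hγ : ∀ i, 0 < γ i) (n : ℕ) :
    ∑ b ∈ (finite_Delta hγ n).toFinset, (⌊weight d γ b⌋₊ : ℝ) =
      n * (Delta d γ n).ncard - ∑ k ∈ range n, ((Delta d γ k).ncard : ℝ) := by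
  have hγ' : ∀ i, 0 ≤ γ i := fun i => (hγ i).le
  have hlevel : ∀ k ∈ range n, #{b ∈ (finite_Delta hγ n).toFinset | k < ⌊weight d γ b⌋₊} =
      (finite_Delta hγ n).toFinset.card - (finite_Delta hγ k).toFinset.card := by
    intro k hk
    rw [← card_sdiff_of_subset (Set.Finite.toFinset_subset_toFinset.2
      (Delta_mono (mem_range.1 hk).le))]
    congr 1
    ext b
    simp [← floor_weight_le_iff_mem_Delta hγ']
  have hbound : ∀ b ∈ (finite_Delta hγ n).toFinset, ⌊weight d γ b⌋₊ ≤ n := fun b hb =>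
    (floor_weight_le_iff_mem_Delta hγ' b n).2 ((finite_Delta hγ n).mem_toFinset.1 hb)
  rw [← Nat.cast_sum, sum_eq_sum_range_card_filter_lt _ _ hbound, sum_congr rfl hlevel]
  rw [Nat.cast_sum, sum_congr rfl fun k hk => Nat.cast_sub (card_le_card
    (Set.Finite.toFinset_subset_toFinset.2 (Delta_mono (mem_range.1 hk).le)))]
  simp [sum_sub_distrib, Set.ncard_eq_toFinset_card _ (finite_Delta hγ _)]

theorem sum_weight_Delta_bounds (hγ : ∀ i, 0 < γ i) (n : ℕ) :
    n * (Delta d γ n).ncard - ∑ k ∈ range n, ((Delta d γ k).ncard : ℝ) ≤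
        ∑ b ∈ (finite_Delta hγ n).toFinset, weight d γ b ∧
      ∑ b ∈ (finite_Delta hγ n).toFinset, weight d γ b ≤
        (n + 1) * (Delta d γ n).ncard - ∑ k ∈ range n, ((Delta d γ k).ncard : ℝ) := by
  have hfloor := sum_floor_weight_Delta hγ n
  constructor
  · rw [← hfloor]
    exact sum_le_sum fun b _ => Nat.floor_le (weight_nonneg (fun i => (hγ i).le) b)
  · calc ∑ b ∈ (finite_Delta hγ n).toFinset, weight d γ b
        ≤ ∑ b ∈ (finite_Delta hγ n).toFinset, ((⌊weight d γ b⌋₊ : ℝ) + 1) :=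
          sum_le_sum fun b _ => (Nat.lt_floor_add_one _).le
      _ = ∑ b ∈ (finite_Delta hγ n).toFinset, (⌊weight d γ b⌋₊ : ℝ) + (Delta d γ n).ncard := by
          rw [sum_add_distrib, sum_const, nsmul_one,
            ← Set.ncard_eq_toFinset_card _ (finite_Delta hγ n)]
      _ = _ := by rw [hfloor]; ring

def simplex (γ : Fin d → ℝ) : Set (Fin d → ℝ) :=
  {x | (∀ i, 0 ≤ x i) ∧ ∑ i, x i * γ i < 1}

theorem convex_simplex : Convex ℝ (simplex γ) := by
  have hlin : IsLinearMap ℝ fun x : Fin d → ℝ => ∑ i, x i * γ i :=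
    ⟨fun x y => by simp [add_mul, sum_add_distrib], fun c x => by simp [mul_sum, mul_assoc]⟩
  rw [simplex, Set.ofPred_and, Set.ofPred_forall]
  exact (convex_iInter fun i => convex_halfSpace_ge (LinearMap.proj i).isLinear 0).inter
    (convex_halfSpace_lt hlin 1)

theorem measurableSet_simplex : MeasurableSet (simplex γ) := by
  rw [simplex, Set.ofPred_and, Set.ofPred_forall]
  exact (MeasurableSet.iInter fun i =>
    measurableSet_le measurable_const (measurable_pi_apply i)).inter
      (measurableSet_lt (by fun_prop) measurable_const)

theorem simplex_subset_pi_Icc (hγ : ∀ i, 0 < γ i) :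
    simplex γ ⊆ Set.Icc 0 fun i => (γ i)⁻¹ := by
  intro x hx
  refine ⟨hx.1, fun i => ?_⟩
  show x i ≤ (γ i)⁻¹
  rw [← one_div, le_div_iff₀ (hγ i)]
  exact (single_le_sum (f := fun j => x j * γ j) (fun j _ => mul_nonneg (hx.1 j) (hγ j).le)
    (mem_univ i)).trans hx.2.le

theorem sum_add_one_pos (hγ : ∀ i, 0 < γ i) : 0 < ∑ i, γ i + 1 :=
  add_pos_of_nonneg_of_pos (sum_nonneg fun i _ => (hγ i).le) one_pos

theorem pi_Ioo_subset_simplex (hγ : ∀ i, 0 < γ i) :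
    (Set.univ.pi fun _ : Fin d => Set.Ioo (0 : ℝ) (∑ i, γ i + 1)⁻¹) ⊆ simplex γ := by
  intro x hx
  simp only [Set.mem_pi, Set.mem_univ, Set.mem_Ioo, forall_true_left] at hx
  have hpos := sum_add_one_pos hγ
  refine ⟨fun i => (hx i).1.le, ?_⟩
  calc ∑ i, x i * γ i ≤ ∑ i, (∑ i, γ i + 1)⁻¹ * γ i :=
        sum_le_sum fun i _ => mul_le_mul_of_nonneg_right (hx i).2.le (hγ i).le
    _ = (∑ i, γ i + 1)⁻¹ * ∑ i, γ i := by rw [mul_sum]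
    _ < 1 := by rw [inv_mul_lt_one₀ hpos]; linarith

theorem measureReal_simplex_pos (hγ : ∀ i, 0 < γ i) : 0 < volume.real (simplex γ) := by
  have hpos := sum_add_one_pos hγ
  refine ENNReal.toReal_pos (ne_of_gt ?_) ((Metric.isBounded_Icc _ _).subset
    (simplex_subset_pi_Icc hγ)).measure_lt_top.ne
  refine lt_of_lt_of_le ?_ (measure_mono (pi_Ioo_subset_simplex hγ))
  exact (isOpen_set_pi Set.finite_univ fun _ _ => isOpen_Ioo).measure_pos volume
    ⟨fun _ => (∑ i, γ i + 1)⁻¹ / 2, fun _ _ => ⟨half_pos (inv_pos.2 hpos),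
      half_lt_self (inv_pos.2 hpos)⟩⟩

-- `Submodule.span ℤ (Set.range (Pi.basisFun ℝ (Fin d)))` is the lattice `ℤ^d ⊆ ℝ^d`.
theorem simplex_inter_smul_span_eq_image (n : ℕ) [NeZero n] :
    simplex γ ∩ (n : ℝ)⁻¹ •
      (Submodule.span ℤ (Set.range (Pi.basisFun ℝ (Fin d))) : Set (Fin d → ℝ)) =
      (fun m i => (m i : ℝ) / n) '' {m | weight d γ m < n} := by
  have hn : (0 : ℝ) < n := Nat.cast_pos.2 (Nat.pos_of_neZero n)
  ext x
  rw [Set.mem_inter_iff, ← Submodule.coe_pointwise_smul, SetLike.mem_coe,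
    BoxIntegral.unitPartition.mem_smul_span_iff, Set.mem_image]
  constructor
  · rintro ⟨⟨hx0, hx1⟩, hxL⟩
    choose z hz using hxL
    have hz_cast : ∀ i, ((z i).toNat : ℝ) = n * x i := fun i => by
      have hz0 := mul_nonneg hn.le (hx0 i)
      rw [← hz i, algebraMap_int_eq, eq_intCast, Int.cast_nonneg_iff] at hz0
      rw [← Int.cast_natCast, Int.toNat_of_nonneg hz0, ← hz i]
      rfl
    refine ⟨fun i => (z i).toNat, ?_, funext fun i => ?_⟩
    · show ∑ i, ((z i).toNat : ℝ) * γ i < n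
      simp only [hz_cast, mul_assoc, ← mul_sum]
      exact mul_lt_of_lt_one_right hn hx1
    · simp only [hz_cast]
      field_simp
  · rintro ⟨m, hm, rfl⟩
    refine ⟨⟨fun i => by positivity, ?_⟩, fun i => ⟨m i, ?_⟩⟩
    · simp only [div_mul_eq_mul_div, ← sum_div]
      exact (div_lt_one hn).2 hm
    · simp [mul_div_cancel₀ _ hn.ne']

theorem natCard_simplex_inter_smul_span (n : ℕ) [NeZero n] :
    Nat.card ↥(simplex γ ∩ (n : ℝ)⁻¹ •
      (Submodule.span ℤ (Set.range (Pi.basisFun ℝ (Fin d))) : Set (Fin d → ℝ))) =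
      {m | weight d γ m < n}.ncard := by
  have hn : (n : ℝ) ≠ 0 := Nat.cast_ne_zero.2 (NeZero.ne n)
  rw [simplex_inter_smul_span_eq_image, Nat.card_coe_set_eq, Set.ncard_image_of_injective]
  intro m m' h
  funext i
  simpa [div_left_inj' hn] using congr_fun h i

theorem tendsto_ncard_Delta_div_pow (hγ : ∀ i, 0 < γ i) :
    Tendsto (fun n : ℕ => ((Delta d γ n).ncard : ℝ) / (n : ℝ) ^ d) atTop
      (𝓝 (volume.real (simplex γ))) := by
  have hlattice := tendsto_card_div_pow_atTop_volume (simplex γ)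
    ((Metric.isBounded_Icc _ _).subset (simplex_subset_pi_Icc hγ)) measurableSet_simplex
    (convex_simplex.addHaar_frontier volume)
  have hshift : Tendsto (fun n : ℕ => ((Delta d γ n).ncard : ℝ) / ((n : ℝ) + 1) ^ d) atTop
      (𝓝 (volume.real (simplex γ))) := by
    refine ((tendsto_add_atTop_iff_nat 1).2 hlattice).congr fun n => ?_
    rw [natCard_simplex_inter_smul_span, Fintype.card_fin]
    push_cast
    rfl
  rw [← mul_one (volume.real _), ← one_pow d]
  refine (hshift.mul ((tendsto_natCast_add_div_natCast 1).pow d)).congr' ?_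
  filter_upwards [eventually_gt_atTop 0] with n hn
  have : ((n : ℝ) + 1) ^ d ≠ 0 := by positivity
  rw [div_pow, div_mul_div_cancel₀ this]

theorem tendsto_sum_weight_Delta_div_pow (hγ : ∀ i, 0 < γ i) :
    Tendsto (fun n : ℕ => (∑ b ∈ (finite_Delta hγ n).toFinset, weight d γ b) / (n : ℝ) ^ (d + 1))
      atTop (𝓝 (volume.real (simplex γ) - volume.real (simplex γ) / (d + 1))) := by
  have hcount := tendsto_ncard_Delta_div_pow hγ
  have hmain := hcount.sub (tendsto_sum_range_div_pow_succ d hcount)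
  have hupper := hmain.add (hcount.mul (tendsto_const_div_atTop_nhds_zero_nat (1 : ℝ)))
  rw [mul_zero, add_zero] at hupper
  refine tendsto_of_tendsto_of_tendsto_of_le_of_le' hmain hupper ?_ ?_
  all_goals
    filter_upwards [eventually_gt_atTop 0] with n hn
    have hn' : (n : ℝ) ≠ 0 := Nat.cast_ne_zero.2 hn.ne'
  · calc _ = (n * (Delta d γ n).ncard - ∑ k ∈ range n, ((Delta d γ k).ncard : ℝ)) /
          (n : ℝ) ^ (d + 1) := by field_simp; ring
      _ ≤ _ := by gcongr; exact (sum_weight_Delta_bounds hγ n).1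
  · calc _ ≤ ((n + 1) * (Delta d γ n).ncard - ∑ k ∈ range n, ((Delta d γ k).ncard : ℝ)) /
          (n : ℝ) ^ (d + 1) := by gcongr; exact (sum_weight_Delta_bounds hγ n).2
      _ = _ := by field_simp; ring

theorem add_one_mem_upperBounds_weight_image_Delta (n : ℕ) :
    (n : ℝ) + 1 ∈ upperBounds (weight d γ '' Delta d γ n) := by
  rintro _ ⟨m, hm, rfl⟩
  exact hm.le

theorem maxWeight_Delta_le (n : ℕ) : maxWeight d γ (Delta d γ n) ≤ n + 1 :=
  csSup_le ⟨_, Set.mem_image_of_mem _ (zero_mem_Delta n)⟩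
    (add_one_mem_upperBounds_weight_image_Delta n)

theorem sub_le_maxWeight_Delta {i : Fin d} (hi : 0 < γ i) (n : ℕ) :
    n - γ i ≤ maxWeight d γ (Delta d γ n) := by
  set k := ⌊(n : ℝ) / γ i⌋₊
  have hk_le : (k : ℝ) * γ i ≤ n := (le_div_iff₀ hi).1 (Nat.floor_le (by positivity))
  have hk_gt : (n : ℝ) - γ i < k * γ i := by
    have := Nat.lt_floor_add_one ((n : ℝ) / γ i)
    rw [div_lt_iff₀ hi] at this
    linarith
  have hmem : Pi.single i k ∈ Delta d γ n := show weight d γ _ < n + 1 by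
    rw [weight_single]; linarith
  refine hk_gt.le.trans ?_
  rw [← weight_single]
  exact le_csSup ⟨_, add_one_mem_upperBounds_weight_image_Delta n⟩ (Set.mem_image_of_mem _ hmem)

theorem tendsto_maxWeight_Delta_div {i : Fin d} (hi : 0 < γ i) :
    Tendsto (fun n : ℕ => maxWeight d γ (Delta d γ n) / n) atTop (𝓝 1) := by
  refine tendsto_of_tendsto_of_tendsto_of_le_of_le' (tendsto_natCast_add_div_natCast (-γ i))
    (tendsto_natCast_add_div_natCast 1) ?_ ?_
  all_goals
    filter_upwards [eventually_gt_atTop 0] with n hn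
    gcongr
  · rw [← sub_eq_add_neg]; exact sub_le_maxWeight_Delta hi n
  · exact maxWeight_Delta_le n

end Weights

open Filter in
theorem stmt_7 (d : ℕ) (hd : 1 ≤ d) (γ : Fin d → ℝ) (hγ : ∀ i, 0 < γ i) :
    Tendsto (fun n : ℕ => meanWeight d γ (Delta d γ n) / maxWeight d γ (Delta d γ n))
      atTop (nhds ((d : ℝ) / (d + 1))) := by
  set v := volume.real (simplex γ)
  have hv : v ≠ 0 := (measureReal_simplex_pos hγ).ne'
  have hlim := (tendsto_sum_weight_Delta_div_pow hγ).div
    ((tendsto_ncard_Delta_div_pow hγ).mul (tendsto_maxWeight_Delta_div (hγ ⟨0, hd⟩)))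
    (by simpa using hv)
  rw [show (v - v / (d + 1)) / (v * 1) = (d : ℝ) / (d + 1) by field_simp; ring] at hlim
  refine hlim.congr' ?_
  filter_upwards [eventually_gt_atTop 0] with n hn
  have hpow : (n : ℝ) ^ (d + 1) ≠ 0 := pow_ne_zero _ (Nat.cast_ne_zero.2 hn.ne')
  rw [Pi.div_apply, meanWeight, finsum_mem_eq_finite_toFinset_sum _ (finite_Delta hγ n),
    div_mul_div_comm, ← pow_succ, div_div_div_cancel_right₀ hpow]
  ring
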